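/- Let U = {x ∈ ℝ^N : x_N ≤ γ(x')} be the subgraph of γ : ℝ^{N−1} → ℝ, where x = (x', x_N), and suppose γ(x') = α|x'| + o(|x'|) as |x'| → +∞ for some α ∈ ℝ. Then B(U) = {e ∈ S^{N-1} : e_N > α|e'|} and U(U) = {e ∈ S^{N-1} : e_N ≤ α|e'|}. -/

import Mathlib

open Filter Metric Topology

/-- The first `n` coordinates of a point of `ℝ^{n+1}`. -/
noncomputable def firstCoords (n : ℕ) (x : EuclideanSpace ℝ (Fin (n + 1))) :
    EuclideanSpace ℝ (Fin n) :=
  WithLp.toLp 2 (fun i : Fin n => x i.castSucc)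

/-- The subgraph `U = {x = (x', x_N) : x_N ≤ γ(x')}` of `γ : ℝ^{N-1} → ℝ`. -/
def subgraphSet (n : ℕ) (γ : EuclideanSpace ℝ (Fin n) → ℝ) :
    Set (EuclideanSpace ℝ (Fin (n + 1))) :=
  {x | x (Fin.last n) ≤ γ (firstCoords n x)}

/-!
Along the ray `τ ξ`, the vertical segment down to the graph gives
`infDist (τ ξ) U ≤ (τ ξ_N - γ (τ ξ'))⁺ = τ (ξ_N - α |ξ'|)⁺ + o(τ)`, so the ratio tends to `0`
when `ξ_N ≤ α |ξ'|`. If instead `ξ_N > α |ξ'|`, choose `β > α` with `β |ξ'| < ξ_N`. Local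
boundedness and the asymptotics give `γ ≤ C + β |·|` everywhere, and `x ↦ x_N - β |x'|` is
`(1 + |β|)`-Lipschitz and at most `C` on `U`; hence
`infDist (τ ξ) U ≥ (τ (ξ_N - β |ξ'|) - C) / (1 + |β|)`, which grows linearly in `τ`.
-/

section Growth

variable {E : Type*} [NormedAddCommGroup E] {γ : E → ℝ} {α : ℝ}

theorem tendsto_apply_smul_div_atTop [NormedSpace ℝ E]
    (hasymp : ∀ ε : ℝ, 0 < ε → ∃ R : ℝ, ∀ x : E, R ≤ ‖x‖ → |γ x - α * ‖x‖| ≤ ε * ‖x‖)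
    (v : E) : Tendsto (fun τ : ℝ => γ (τ • v) / τ) atTop (𝓝 (α * ‖v‖)) := by
  rcases eq_or_ne v 0 with rfl | hv
  · simpa using tendsto_const_nhds.div_atTop tendsto_id
  have hv' : 0 < ‖v‖ := norm_pos_iff.mpr hv
  rw [Metric.tendsto_atTop]
  intro ε hε
  obtain ⟨R, hR⟩ := hasymp (ε / (2 * ‖v‖)) (by positivity)
  refine ⟨max 1 (R / ‖v‖), fun τ hτ => ?_⟩
  have hτ0 : 0 < τ := lt_of_lt_of_le one_pos (le_of_max_le_left hτ)
  have hnorm : ‖τ • v‖ = τ * ‖v‖ := by rw [norm_smul, Real.norm_of_nonneg hτ0.le]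
  have hbound := hR (τ • v) (by rw [hnorm, ← div_le_iff₀ hv']; exact le_of_max_le_right hτ)
  rw [hnorm] at hbound
  calc dist (γ (τ • v) / τ) (α * ‖v‖) = |γ (τ • v) - α * (τ * ‖v‖)| / τ := by
        rw [Real.dist_eq, ← abs_of_pos hτ0, ← abs_div, abs_of_pos hτ0]
        congr 1; field_simp
    _ ≤ ε / (2 * ‖v‖) * (τ * ‖v‖) / τ := by gcongr
    _ = ε / 2 := by field_simp
    _ < ε := half_lt_self hε

theorem exists_le_add_mul_norm
    (hloc : ∀ r : ℝ, ∃ M : ℝ, ∀ x : E, ‖x‖ ≤ r → |γ x| ≤ M)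
    (hasymp : ∀ ε : ℝ, 0 < ε → ∃ R : ℝ, ∀ x : E, R ≤ ‖x‖ → |γ x - α * ‖x‖| ≤ ε * ‖x‖)
    {β : ℝ} (hβ : α < β) : ∃ C : ℝ, ∀ x : E, γ x ≤ C + β * ‖x‖ := by
  obtain ⟨R, hR⟩ := hasymp (β - α) (sub_pos.mpr hβ)
  obtain ⟨M, hM⟩ := hloc R
  refine ⟨|M| + |β| * |R|, fun x => ?_⟩
  rcases le_total ‖x‖ R with hx | hx
  · have hγ := (abs_le.mp (hM x hx)).2
    have : -(|β| * |R|) ≤ β * ‖x‖ := by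
      calc -(|β| * |R|) ≤ -(|β| * ‖x‖) := by
            gcongr; exact hx.trans (le_abs_self R)
        _ ≤ β * ‖x‖ := by
            rw [← abs_norm x, ← abs_mul, abs_norm x]; exact neg_abs_le _
    linarith [le_abs_self M]
  · have hγ := (abs_le.mp (hR x hx)).2
    nlinarith [abs_nonneg β, abs_nonneg R, abs_nonneg M]

end Growth

theorem infDist_smul_div_le {E : Type*} [NormedAddCommGroup E] [NormedSpace ℝ E]
    (s : Set E) (ξ : E) {τ : ℝ} (hτ : 1 ≤ τ) :
    infDist (τ • ξ) s / τ ≤ ‖ξ‖ + infDist 0 s := by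
  have hτ0 : 0 < τ := one_pos.trans_le hτ
  rw [div_le_iff₀ hτ0]
  calc infDist (τ • ξ) s ≤ infDist 0 s + dist (τ • ξ) 0 := infDist_le_infDist_add_dist
    _ = infDist 0 s + τ * ‖ξ‖ := by rw [dist_zero_right, norm_smul, Real.norm_of_nonneg hτ0.le]
    _ ≤ (‖ξ‖ + infDist 0 s) * τ := by nlinarith [infDist_nonneg (x := (0 : E)) (s := s)]

theorem div_le_infDist_of_sub_le_mul_dist {X : Type*} [PseudoMetricSpace X] {f : X → ℝ}
    {L C : ℝ} (hL : 0 < L) (hf : ∀ x y, f x - f y ≤ L * dist x y) {s : Set X}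
    (hs : s.Nonempty) (hC : ∀ y ∈ s, f y ≤ C) (x : X) :
    (f x - C) / L ≤ infDist x s := by
  refine (le_infDist hs).mpr fun y hy => ?_
  rw [div_le_iff₀' hL]
  linarith [hf x y, hC y hy]

section Coordinates

variable {n : ℕ}

theorem firstCoords_sub (x y : EuclideanSpace ℝ (Fin (n + 1))) :
    firstCoords n (x - y) = firstCoords n x - firstCoords n y := by
  ext i; simp [firstCoords]

theorem firstCoords_smul (c : ℝ) (x : EuclideanSpace ℝ (Fin (n + 1))) :
    firstCoords n (c • x) = c • firstCoords n x := by
  ext i; simp [firstCoords]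

theorem firstCoords_single_last (t : ℝ) :
    firstCoords n (EuclideanSpace.single (Fin.last n) t) = 0 := by
  ext i; simp [firstCoords]

theorem norm_sq_eq_norm_firstCoords_sq_add (x : EuclideanSpace ℝ (Fin (n + 1))) :
    ‖x‖ ^ 2 = ‖firstCoords n x‖ ^ 2 + x (Fin.last n) ^ 2 := by
  rw [EuclideanSpace.norm_sq_eq, EuclideanSpace.norm_sq_eq, Fin.sum_univ_castSucc]
  simp [firstCoords]

theorem norm_firstCoords_le (x : EuclideanSpace ℝ (Fin (n + 1))) :
    ‖firstCoords n x‖ ≤ ‖x‖ := by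
  refine (sq_le_sq₀ (norm_nonneg _) (norm_nonneg _)).mp ?_
  rw [norm_sq_eq_norm_firstCoords_sq_add x]
  exact le_add_of_nonneg_right (sq_nonneg _)

theorem abs_last_le_norm (x : EuclideanSpace ℝ (Fin (n + 1))) :
    |x (Fin.last n)| ≤ ‖x‖ := by
  rw [← abs_norm x, ← sq_le_sq, norm_sq_eq_norm_firstCoords_sq_add x]
  exact le_add_of_nonneg_left (sq_nonneg _)

theorem last_sub_mul_norm_firstCoords_sub_le (β : ℝ) (x y : EuclideanSpace ℝ (Fin (n + 1))) :
    (x (Fin.last n) - β * ‖firstCoords n x‖) - (y (Fin.last n) - β * ‖firstCoords n y‖)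
      ≤ (1 + |β|) * dist x y := by
  have hlast : x (Fin.last n) - y (Fin.last n) ≤ dist x y := by
    simpa [dist_eq_norm] using (le_abs_self _).trans (abs_last_le_norm (x - y))
  have hfirst : β * (‖firstCoords n y‖ - ‖firstCoords n x‖) ≤ |β| * dist x y := by
    calc β * (‖firstCoords n y‖ - ‖firstCoords n x‖)
        ≤ |β| * |‖firstCoords n x‖ - ‖firstCoords n y‖| := by
          rw [abs_sub_comm, ← abs_mul]; exact le_abs_self _
      _ ≤ |β| * ‖firstCoords n (x - y)‖ := by
          rw [firstCoords_sub]; gcongr; exact abs_norm_sub_norm_le _ _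
      _ ≤ |β| * dist x y := by rw [dist_eq_norm]; gcongr; exact norm_firstCoords_le _
  linarith

end Coordinates

section Subgraph

variable {n : ℕ} {γ : EuclideanSpace ℝ (Fin n) → ℝ}

theorem subgraphSet_nonempty : (subgraphSet n γ).Nonempty :=
  ⟨EuclideanSpace.single (Fin.last n) (γ 0), by simp [subgraphSet, firstCoords_single_last]⟩

theorem infDist_subgraphSet_le (x : EuclideanSpace ℝ (Fin (n + 1))) :
    infDist x (subgraphSet n γ) ≤ max (x (Fin.last n) - γ (firstCoords n x)) 0 := by
  set c := max (x (Fin.last n) - γ (firstCoords n x)) 0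
  have hmem : x - EuclideanSpace.single (Fin.last n) c ∈ subgraphSet n γ := by
    simp only [subgraphSet, Set.mem_ofPred_eq, firstCoords_sub, firstCoords_single_last, sub_zero,
      PiLp.sub_apply, PiLp.single_apply, ↓reduceIte]
    linarith [le_max_left (x (Fin.last n) - γ (firstCoords n x)) 0]
  calc infDist x (subgraphSet n γ) ≤ dist x (x - EuclideanSpace.single (Fin.last n) c) :=
        infDist_le_dist_of_mem hmem
    _ = c := by simp [c]

theorem div_le_infDist_subgraphSet {C β : ℝ} (hγ : ∀ y, γ y ≤ C + β * ‖y‖)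
    (x : EuclideanSpace ℝ (Fin (n + 1))) :
    (x (Fin.last n) - β * ‖firstCoords n x‖ - C) / (1 + |β|) ≤ infDist x (subgraphSet n γ) :=
  div_le_infDist_of_sub_le_mul_dist (by positivity) (last_sub_mul_norm_firstCoords_sub_le β)
    subgraphSet_nonempty (fun y hy => by linarith [hγ (firstCoords n y), hy.out]) x

theorem div_le_infDist_subgraphSet_smul_div {C β : ℝ} (hγ : ∀ y, γ y ≤ C + β * ‖y‖)
    (ξ : EuclideanSpace ℝ (Fin (n + 1))) {τ : ℝ} (hτ : 0 < τ) :
    (ξ (Fin.last n) - β * ‖firstCoords n ξ‖ - C / τ) / (1 + |β|)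
      ≤ infDist (τ • ξ) (subgraphSet n γ) / τ := by
  have hlower := div_le_infDist_subgraphSet hγ (τ • ξ)
  rw [firstCoords_smul, norm_smul, Real.norm_of_nonneg hτ.le] at hlower
  calc (ξ (Fin.last n) - β * ‖firstCoords n ξ‖ - C / τ) / (1 + |β|)
      = (τ * ξ (Fin.last n) - β * (τ * ‖firstCoords n ξ‖) - C) / (1 + |β|) / τ := by
        field_simp
    _ ≤ infDist (τ • ξ) (subgraphSet n γ) / τ := by
        gcongr; simpa using hlower

end Subgraph

theorem exists_gt_mul_lt {a b c : ℝ} (hb : 0 ≤ b) (h : a * b < c) : ∃ β, a < β ∧ β * b < c := by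
  have hgap : 0 < c - a * b := sub_pos.mpr h
  refine ⟨a + (c - a * b) / (b + 1), lt_add_of_pos_right a (by positivity), ?_⟩
  have : (c - a * b) / (b + 1) * b < c - a * b := by
    rw [div_mul_eq_mul_div, div_lt_iff₀ (by positivity)]
    nlinarith
  linarith [add_mul a ((c - a * b) / (b + 1)) b]

section Directions

variable {n : ℕ} {γ : EuclideanSpace ℝ (Fin n) → ℝ} {α : ℝ}

theorem tendsto_infDist_subgraphSet_div_atTop_zero
    (hasymp : ∀ ε : ℝ, 0 < ε → ∃ R : ℝ, ∀ x' : EuclideanSpace ℝ (Fin n),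
      R ≤ ‖x'‖ → |γ x' - α * ‖x'‖| ≤ ε * ‖x'‖)
    {ξ : EuclideanSpace ℝ (Fin (n + 1))} (h : ξ (Fin.last n) ≤ α * ‖firstCoords n ξ‖) :
    Tendsto (fun τ : ℝ => infDist (τ • ξ) (subgraphSet n γ) / τ) atTop (𝓝 0) := by
  have hupper : Tendsto (fun τ : ℝ => max (ξ (Fin.last n) - γ (τ • firstCoords n ξ) / τ) 0)
      atTop (𝓝 (max (ξ (Fin.last n) - α * ‖firstCoords n ξ‖) 0)) :=
    ((tendsto_apply_smul_div_atTop hasymp (firstCoords n ξ)).const_sub _).max tendsto_const_nhds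
  rw [max_eq_right (sub_nonpos.mpr h)] at hupper
  refine tendsto_of_tendsto_of_tendsto_of_le_of_le' tendsto_const_nhds hupper ?_ ?_
  · filter_upwards [eventually_gt_atTop 0] with τ hτ using div_nonneg infDist_nonneg hτ.le
  · filter_upwards [eventually_gt_atTop 0] with τ hτ
    rw [div_le_iff₀ hτ]
    calc infDist (τ • ξ) (subgraphSet n γ)
        ≤ max ((τ • ξ) (Fin.last n) - γ (firstCoords n (τ • ξ))) 0 := infDist_subgraphSet_le _
      _ = max (ξ (Fin.last n) - γ (τ • firstCoords n ξ) / τ) 0 * τ := by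
        rw [max_mul_of_nonneg _ _ hτ.le, zero_mul, sub_mul, div_mul_cancel₀ _ hτ.ne',
          firstCoords_smul]
        simp [mul_comm]

theorem zero_lt_liminf_infDist_subgraphSet_div
    (hloc : ∀ r : ℝ, ∃ M : ℝ, ∀ x' : EuclideanSpace ℝ (Fin n), ‖x'‖ ≤ r → |γ x'| ≤ M)
    (hasymp : ∀ ε : ℝ, 0 < ε → ∃ R : ℝ, ∀ x' : EuclideanSpace ℝ (Fin n),
      R ≤ ‖x'‖ → |γ x' - α * ‖x'‖| ≤ ε * ‖x'‖)
    {ξ : EuclideanSpace ℝ (Fin (n + 1))} (h : α * ‖firstCoords n ξ‖ < ξ (Fin.last n)) :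
    0 < liminf (fun τ : ℝ => infDist (τ • ξ) (subgraphSet n γ) / τ) atTop := by
  obtain ⟨β, hαβ, hβ⟩ := exists_gt_mul_lt (norm_nonneg _) h
  obtain ⟨C, hC⟩ := exists_le_add_mul_norm hloc hasymp hαβ
  have hlower : Tendsto (fun τ : ℝ => (ξ (Fin.last n) - β * ‖firstCoords n ξ‖ - C / τ) / (1 + |β|))
      atTop (𝓝 ((ξ (Fin.last n) - β * ‖firstCoords n ξ‖) / (1 + |β|))) := by
    simpa only [sub_zero, id] using
      (tendsto_const_nhds.sub (tendsto_const_nhds.div_atTop tendsto_id)).div_const (1 + |β|)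
  calc (0 : ℝ) < (ξ (Fin.last n) - β * ‖firstCoords n ξ‖) / (1 + |β|) := by
        have : 0 < ξ (Fin.last n) - β * ‖firstCoords n ξ‖ := sub_pos.mpr hβ
        positivity
    _ = liminf (fun τ : ℝ => (ξ (Fin.last n) - β * ‖firstCoords n ξ‖ - C / τ) / (1 + |β|))
          atTop := hlower.liminf_eq.symm
    _ ≤ liminf (fun τ : ℝ => infDist (τ • ξ) (subgraphSet n γ) / τ) atTop := by
        refine liminf_le_liminf ?_ hlower.isBoundedUnder_ge
          (isCoboundedUnder_ge_of_eventually_le atTop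
            (x := ‖ξ‖ + infDist 0 (subgraphSet n γ)) ?_)
        · filter_upwards [eventually_gt_atTop 0] with τ hτ
            using div_le_infDist_subgraphSet_smul_div hC ξ hτ
        · filter_upwards [eventually_ge_atTop 1] with τ hτ using infDist_smul_div_le _ ξ hτ

end Directions

theorem subgraph_linear_growth_directions_general (n : ℕ)
    (γ : EuclideanSpace ℝ (Fin n) → ℝ) (α : ℝ)
    (hloc : ∀ r : ℝ, ∃ M : ℝ, ∀ x' : EuclideanSpace ℝ (Fin n), ‖x'‖ ≤ r → |γ x'| ≤ M)
    (hasymp : ∀ ε : ℝ, 0 < ε → ∃ R : ℝ, ∀ x' : EuclideanSpace ℝ (Fin n),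
      R ≤ ‖x'‖ → |γ x' - α * ‖x'‖| ≤ ε * ‖x'‖) :
    ∀ ξ : EuclideanSpace ℝ (Fin (n + 1)), ‖ξ‖ = 1 →
      ((0 < Filter.liminf
          (fun τ : ℝ => Metric.infDist (τ • ξ) (subgraphSet n γ) / τ) Filter.atTop)
        ↔ α * ‖firstCoords n ξ‖ < ξ (Fin.last n)) ∧
      ((Filter.Tendsto
          (fun τ : ℝ => Metric.infDist (τ • ξ) (subgraphSet n γ) / τ)
          Filter.atTop (nhds 0))
        ↔ ξ (Fin.last n) ≤ α * ‖firstCoords n ξ‖) := by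
  intro ξ _
  have hliminf_pos := zero_lt_liminf_infDist_subgraphSet_div (ξ := ξ) hloc hasymp
  have htendsto_zero := tendsto_infDist_subgraphSet_div_atTop_zero (ξ := ξ) hasymp
  have hexclusive : Tendsto (fun τ : ℝ => infDist (τ • ξ) (subgraphSet n γ) / τ) atTop (𝓝 0) →
      ¬ 0 < liminf (fun τ : ℝ => infDist (τ • ξ) (subgraphSet n γ) / τ) atTop :=
    fun hlim => by rw [hlim.liminf_eq]; exact lt_irrefl 0
  constructor
  · exact ⟨fun hpos => not_le.mp fun hle => hexclusive (htendsto_zero hle) hpos, hliminf_pos⟩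
  · exact ⟨fun hlim => not_lt.mp fun hlt => hexclusive hlim (hliminf_pos hlt), htendsto_zero⟩

/-- if `γ` is locally bounded and `γ(x') = α|x'| + o(|x'|)` as
`|x'| → +∞`, then `B(U) = {e ∈ S^{N-1} : e_N > α|e'|}` and
`U(U) = {e ∈ S^{N-1} : e_N ≤ α|e'|}` for the subgraph `U` of `γ`. -/
theorem subgraph_linear_growth_directions (n : ℕ) (hn : 1 ≤ n)
    (γ : EuclideanSpace ℝ (Fin n) → ℝ) (α : ℝ)
    (hloc : ∀ r : ℝ, ∃ M : ℝ, ∀ x' : EuclideanSpace ℝ (Fin n), ‖x'‖ ≤ r → |γ x'| ≤ M)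
    (hasymp : ∀ ε : ℝ, 0 < ε → ∃ R : ℝ, ∀ x' : EuclideanSpace ℝ (Fin n),
      R ≤ ‖x'‖ → |γ x' - α * ‖x'‖| ≤ ε * ‖x'‖) :
    ∀ ξ : EuclideanSpace ℝ (Fin (n + 1)), ‖ξ‖ = 1 →
      ((0 < Filter.liminf
          (fun τ : ℝ => Metric.infDist (τ • ξ) (subgraphSet n γ) / τ) Filter.atTop)
        ↔ α * ‖firstCoords n ξ‖ < ξ (Fin.last n)) ∧
      ((Filter.Tendsto
          (fun τ : ℝ => Metric.infDist (τ • ξ) (subgraphSet n γ) / τ)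
          Filter.atTop (nhds 0))
        ↔ ξ (Fin.last n) ≤ α * ‖firstCoords n ξ‖) :=
  subgraph_linear_growth_directions_general n γ α hloc hasymp
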